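/- Let $\mu$ be a measure on $[-1,1]$ with infinite support, let $q_{m}$ be a polynomial of degree $2n - m - 1$ that is strictly positive on $[-1,1]$ with $0 \le m \le 2n-1$, and let $\mu_n$ be the measure with $d\mu_n = q_m^{-1} d\mu$. If $x_1 < \cdots < x_n$ are the zeros of the $n$-th monic orthogonal polynomial $q_{\mu_n,n}$, and the weights are defined by $w_j = q_m(x_j)\int L_j(x)\,d\mu_n(x)$ where $L_j$ are the Lagrange basis polynomials for the nodes $x_1,\ldots,x_n$, then $\sum_{j=1}^n w_j\, p(x_j) = \int p(x)\,d\mu(x)$ for every polynomial $p$ of degree at most $m$. -/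

import Mathlib

/-!
The nodes are the zeros of the `n`-th orthogonal polynomial for `μₙ`, so the interpolatory rule
with weights `∫ Lⱼ dμₙ` is the Gauss rule for `μₙ`: dividing by the nodal polynomial, the
quotient is orthogonal to it and the remainder is interpolated exactly, so the rule integrates
every polynomial of degree `≤ 2n - 1` exactly. Applied to `p · qₘ`, whose degree is at most
`m + (2n - m - 1)`, and combined with `∫ p qₘ dμₙ = ∫ p dμ`, this is the claim.
-/

open MeasureTheory Polynomial

section Measures

variable {X : Type*} [MeasurableSpace X] {μ : Measure X}

theorem integrable_of_continuousOn_of_measure_compl_eq_zero [TopologicalSpace X] [T2Space X]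
    [OpensMeasurableSpace X] [IsFiniteMeasure μ] {K : Set X} {f : X → ℝ} (hK : IsCompact K)
    (hμK : μ Kᶜ = 0) (hf : ContinuousOn f K) : Integrable f μ := by
  rw [← Measure.restrict_eq_self_of_ae_mem (mem_ae_iff.mpr hμK)]
  exact hf.integrableOn_compact hK

theorem integral_mul_withDensity_inv {s : Set X} {q : X → ℝ} (hq : Measurable q)
    (hμs : μ sᶜ = 0) (hqpos : ∀ t ∈ s, 0 < q t) (f : X → ℝ) :
    ∫ t, f t * q t ∂μ.withDensity (fun t => ENNReal.ofReal (1 / q t)) = ∫ t, f t ∂μ := by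
  have hdens : Measurable fun t => (1 / q t).toNNReal :=
    measurable_real_toNNReal.comp (measurable_const.div hq)
  change ∫ t, f t * q t ∂μ.withDensity (fun t => ((1 / q t).toNNReal : ENNReal)) = _
  rw [integral_withDensity_eq_integral_smul hdens]
  refine integral_congr_ae ?_
  filter_upwards [mem_ae_iff.mpr hμs] with t ht
  have hqt := hqpos t ht
  rw [NNReal.smul_def, smul_eq_mul, Real.coe_toNNReal _ (by positivity)]
  field_simp

end Measures

theorem Lagrange.eval_basis_eq_prod {F ι : Type*} [Field F] [DecidableEq ι] (s : Finset ι)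
    (x : ι → F) (i : ι) (t : F) :
    (Lagrange.basis s x i).eval t = ∏ k ∈ s.erase i, (t - x k) / (x i - x k) := by
  simp [Lagrange.basis, eval_prod, Lagrange.basisDivisor, div_eq_inv_mul]

section Quadrature

variable {ι : Type*} [DecidableEq ι] {s : Finset ι} {x : ι → ℝ} {ν : Measure ℝ}

theorem integral_eval_mul_eq_zero_of_orthogonal_monomials {Q r : ℝ[X]} {d : ℕ}
    (hint : ∀ p : ℝ[X], Integrable (fun t => p.eval t) ν)
    (horth : ∀ k < d, ∫ t, t ^ k * Q.eval t ∂ν = 0) (hr : r.natDegree < d) :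
    ∫ t, r.eval t * Q.eval t ∂ν = 0 := by
  have hexpand :
      ∀ t, r.eval t * Q.eval t = ∑ k ∈ Finset.range d, r.coeff k * (t ^ k * Q.eval t) :=
    fun t => by rw [eval_eq_sum_range' hr, Finset.sum_mul]; simp only [mul_assoc]
  simp_rw [hexpand]
  rw [integral_finsetSum _ fun k _ => by
    have := hint (C (r.coeff k) * X ^ k * Q)
    simpa only [eval_mul, eval_C, eval_pow, eval_X, mul_assoc] using this]
  refine Finset.sum_eq_zero fun k hk => ?_
  rw [integral_const_mul, horth k (Finset.mem_range.mp hk), mul_zero]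

theorem integral_eval_eq_sum_of_degree_lt (hint : ∀ p : ℝ[X], Integrable (fun t => p.eval t) ν)
    (hx : Set.InjOn x s) {r : ℝ[X]} (hr : r.degree < s.card) :
    ∫ t, r.eval t ∂ν = ∑ i ∈ s, (∫ t, (Lagrange.basis s x i).eval t ∂ν) * r.eval (x i) := by
  conv_lhs => rw [Lagrange.eq_interpolate hx hr]
  simp only [Lagrange.interpolate_apply, eval_finsetSum, eval_mul, eval_C]
  rw [integral_finsetSum _ fun i _ => (hint _).const_mul _]
  exact Finset.sum_congr rfl fun i _ => by rw [integral_const_mul, mul_comm]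

theorem integral_eval_eq_sum_of_natDegree_lt_two_mul
    (hint : ∀ p : ℝ[X], Integrable (fun t => p.eval t) ν) (hx : Set.InjOn x s)
    (horth : ∀ k < s.card, ∫ t, t ^ k * (Lagrange.nodal s x).eval t ∂ν = 0)
    {r : ℝ[X]} (hr : r.natDegree < 2 * s.card) :
    ∫ t, r.eval t ∂ν = ∑ i ∈ s, (∫ t, (Lagrange.basis s x i).eval t ∂ν) * r.eval (x i) := by
  set Q := Lagrange.nodal s x
  have hQ : Q.Monic := Lagrange.nodal_monic
  have hdecomp : r %ₘ Q + Q * (r /ₘ Q) = r := modByMonic_add_div r Q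
  have hquot : (r /ₘ Q).natDegree < s.card := by
    rw [natDegree_divByMonic r hQ, Lagrange.natDegree_nodal]
    omega
  have hrem : (r %ₘ Q).degree < s.card := by
    simpa only [Q, Lagrange.degree_nodal] using degree_modByMonic_lt r hQ
  have hnodes : ∀ i ∈ s, (r %ₘ Q).eval (x i) = r.eval (x i) := fun i hi => by
    conv_rhs => rw [← hdecomp]
    simp [Q, Lagrange.eval_nodal_at_node hi]
  have hsplit : ∫ t, r.eval t ∂ν =
      ∫ t, (r %ₘ Q).eval t ∂ν + ∫ t, (r /ₘ Q).eval t * Q.eval t ∂ν := by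
    rw [← integral_add (hint _) (by simpa using hint (r /ₘ Q * Q))]
    conv_lhs => rw [← hdecomp]
    simp only [eval_add, eval_mul, mul_comm]
  rw [hsplit, integral_eval_mul_eq_zero_of_orthogonal_monomials hint horth hquot, add_zero,
    integral_eval_eq_sum_of_degree_lt hint hx hrem]
  exact Finset.sum_congr rfl fun i hi => by rw [hnodes i hi]

end Quadrature

theorem stmt4_general (n m : ℕ) (hn : 0 < n) (hm : m ≤ 2 * n - 1)
    (μ : Measure ℝ) [IsFiniteMeasure μ]
    (hsupp : μ (Set.Icc (-1 : ℝ) 1)ᶜ = 0)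
    (qm : Polynomial ℝ) (hdeg : qm.natDegree = 2 * n - m - 1)
    (hqmpos : ∀ t ∈ Set.Icc (-1 : ℝ) 1, 0 < qm.eval t)
    (μn : Measure ℝ)
    (hμn : μn = μ.withDensity (fun t => ENNReal.ofReal (1 / qm.eval t)))
    (x : Fin n → ℝ) (hx : StrictMono x)
    (Q : Polynomial ℝ) (hQ : Q = ∏ j, (X - C (x j)))
    (horth : ∀ ν < n, ∫ t, t ^ ν * Q.eval t ∂μn = 0)
    (w : Fin n → ℝ)
    (hw : ∀ j, w j = qm.eval (x j) *
      ∫ t, (∏ k ∈ Finset.univ.erase j, (t - x k) / (x j - x k)) ∂μn) :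
    ∀ p : Polynomial ℝ, p.degree ≤ (m : ℕ) →
      ∑ j, w j * p.eval (x j) = ∫ t, p.eval t ∂μ := by
  intro p hp
  have hμnsupp : μn (Set.Icc (-1 : ℝ) 1)ᶜ = 0 := by
    rw [hμn]; exact withDensity_absolutelyContinuous μ _ hsupp
  have : IsFiniteMeasure μn := hμn ▸ isFiniteMeasure_withDensity_ofReal
    (integrable_of_continuousOn_of_measure_compl_eq_zero isCompact_Icc hsupp
      (continuousOn_const.div qm.continuous.continuousOn fun t ht => (hqmpos t ht).ne')).2
  have hint : ∀ p : ℝ[X], Integrable (fun t => p.eval t) μn := fun p =>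
    integrable_of_continuousOn_of_measure_compl_eq_zero isCompact_Icc hμnsupp
      p.continuous.continuousOn
  have hweights : ∀ j, w j = qm.eval (x j) * ∫ t, (Lagrange.basis Finset.univ x j).eval t ∂μn :=
    fun j => by simp only [hw j, Lagrange.eval_basis_eq_prod]
  have hpqm : (p * qm).natDegree < 2 * (Finset.univ : Finset (Fin n)).card := by
    have := natDegree_le_iff_degree_le.mpr hp
    rw [Finset.card_univ, Fintype.card_fin]
    exact natDegree_mul_le.trans_lt (by omega)
  calc ∑ j, w j * p.eval (x j)
      = ∑ j, (∫ t, (Lagrange.basis Finset.univ x j).eval t ∂μn) * (p * qm).eval (x j) :=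
        Finset.sum_congr rfl fun j _ => by rw [hweights j, eval_mul]; ring
    _ = ∫ t, (p * qm).eval t ∂μn :=
        (integral_eval_eq_sum_of_natDegree_lt_two_mul hint hx.injective.injOn
          (by simpa [hQ, Lagrange.nodal] using horth) hpqm).symm
    _ = ∫ t, p.eval t ∂μ := by
        simpa only [eval_mul, hμn] using integral_mul_withDensity_inv qm.continuous.measurable
          hsupp hqmpos (fun t => p.eval t)

/-- The interpolatory rule with nodes at the zeros of the `n`-th monic orthogonal polynomial
for `dμₙ = qₘ⁻¹ dμ` and weights `wⱼ = qₘ(xⱼ) ∫ Lⱼ dμₙ` is exact for polynomials of degree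
at most `m` with respect to `μ`. -/
theorem stmt4 (n m : ℕ) (hn : 0 < n) (hm : m ≤ 2 * n - 1)
    (μ : Measure ℝ) [IsFiniteMeasure μ]
    (hsupp : μ (Set.Icc (-1 : ℝ) 1)ᶜ = 0)
    (hinf : {t : ℝ | ∀ ε > 0, 0 < μ (Set.Ioo (t - ε) (t + ε))}.Infinite)
    (qm : Polynomial ℝ) (hdeg : qm.natDegree = 2 * n - m - 1)
    (hqmpos : ∀ t ∈ Set.Icc (-1 : ℝ) 1, 0 < qm.eval t)
    (μn : Measure ℝ)
    (hμn : μn = μ.withDensity (fun t => ENNReal.ofReal (1 / qm.eval t)))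
    (x : Fin n → ℝ) (hx : StrictMono x)
    (Q : Polynomial ℝ) (hQ : Q = ∏ j, (X - C (x j)))
    (horth : ∀ ν < n, ∫ t, t ^ ν * Q.eval t ∂μn = 0)
    (w : Fin n → ℝ)
    (hw : ∀ j, w j = qm.eval (x j) *
      ∫ t, (∏ k ∈ Finset.univ.erase j, (t - x k) / (x j - x k)) ∂μn) :
    ∀ p : Polynomial ℝ, p.degree ≤ (m : ℕ) →
      ∑ j, w j * p.eval (x j) = ∫ t, p.eval t ∂μ :=
  stmt4_general n m hn hm μ hsupp qm hdeg hqmpos μn hμn x hx Q hQ horth w hw
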